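/- Fix 1/2 < h₁ ≤ H̄₁ < 1 and let ε ∈ (0, min(1 − H̄₁, h₁ − 1/2)). There exists a constant C > 0 (depending only on ε, h₁, H̄₁) such that for all H₁, H₁′ ∈ [h₁, H̄₁], all H₂ ∈ (1/2, 1), and all s, x, y ∈ ℝ: |K_{H₁,H₂}(s,x,y) − K_{H₁′,H₂}(s,x,y)| ≤ C |H₁ − H₁′| ( K_{h₁−ε, H₂}(s,x,y) + K_{H̄₁+ε, H₂}(s,x,y) ). -/

import Mathlib

open MeasureTheory

/-- `u₊^p`: equals `u ^ p` (real power) if `u > 0`, and `0` otherwise. -/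
noncomputable def plusPow (u p : ℝ) : ℝ := if 0 < u then u ^ p else 0

/-- The kernel `K_{p,q}(s,x,y)` (defined pointwise for arbitrary parameters `p, q`). -/
noncomputable def rosenblattK (H₁ H₂ s x y : ℝ) : ℝ :=
  plusPow (s - x) (H₁ / 2 - 1) * plusPow (s - y) (H₂ / 2 - 1) +
  plusPow (s - x) (H₂ / 2 - 1) * plusPow (s - y) (H₁ / 2 - 1)

/-!
For `u > 0` the map `p ↦ u ^ p` has derivative `log u * u ^ p`, and `|log u|` is absorbed by
moving the exponent a distance `δ` towards the nearer end of `[A, B]`: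
`|log u| * u ^ c ≤ (u ^ A + u ^ B) / δ` when `A + δ ≤ c ≤ B - δ`. Hence `p ↦ u₊^p` is Lipschitz on
`[A + δ, B - δ]` with constant `(u₊^A + u₊^B) / δ`, and the kernel, which is bilinear in such
factors with nonnegative coefficients, inherits the bound.
-/

lemma plusPow_nonneg (u p : ℝ) : 0 ≤ plusPow u p := by
  unfold plusPow
  split_ifs
  exacts [by positivity, le_rfl]

lemma Real.abs_exp_sub_exp_le_mul_max (x y : ℝ) :
    |Real.exp x - Real.exp y| ≤ |x - y| * max (Real.exp x) (Real.exp y) := by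
  wlog hyx : y ≤ x generalizing x y
  · simpa only [abs_sub_comm, max_comm] using this y x (le_of_not_ge hyx)
  have hexp : Real.exp x * (1 + (y - x)) ≤ Real.exp y := by
    calc Real.exp x * (1 + (y - x)) ≤ Real.exp x * Real.exp (y - x) := by
          gcongr; linarith [Real.add_one_le_exp (y - x)]
      _ = Real.exp y := by rw [← Real.exp_add, add_sub_cancel]
  rw [abs_of_nonneg (sub_nonneg.2 (Real.exp_le_exp.2 hyx)), abs_of_nonneg (sub_nonneg.2 hyx),
    max_eq_left (Real.exp_le_exp.2 hyx)]
  linarith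

lemma Real.abs_rpow_sub_rpow_le {u : ℝ} (hu : 0 < u) (p q : ℝ) :
    |u ^ p - u ^ q| ≤ |p - q| * (|Real.log u| * max (u ^ p) (u ^ q)) := by
  have h := Real.abs_exp_sub_exp_le_mul_max (Real.log u * p) (Real.log u * q)
  rwa [← Real.rpow_def_of_pos hu, ← Real.rpow_def_of_pos hu, ← mul_sub, abs_mul,
    mul_comm |Real.log u|, mul_assoc] at h

lemma Real.abs_log_mul_rpow_le {u δ A B c : ℝ} (hu : 0 < u) (hδ : 0 < δ)
    (hA : A + δ ≤ c) (hB : c + δ ≤ B) :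
    |Real.log u| * u ^ c ≤ (u ^ A + u ^ B) / δ := by
  have hA0 := Real.rpow_nonneg hu.le A
  have hB0 := Real.rpow_nonneg hu.le B
  rcases le_total 1 u with h1 | h1
  · calc |Real.log u| * u ^ c ≤ u ^ δ / δ * u ^ c := by
          rw [abs_of_nonneg (Real.log_nonneg h1)]
          gcongr
          exact Real.log_le_rpow_div hu.le hδ
      _ = u ^ (c + δ) / δ := by rw [Real.rpow_add hu]; ring
      _ ≤ (u ^ A + u ^ B) / δ := by
          gcongr
          linarith [Real.rpow_le_rpow_of_exponent_le h1 hB]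
  · calc |Real.log u| * u ^ c ≤ u ^ (-δ) / δ * u ^ c := by
          rw [abs_of_nonpos (Real.log_nonpos hu.le h1), ← Real.log_inv, Real.rpow_neg hu.le,
            ← Real.inv_rpow hu.le]
          gcongr
          exact Real.log_le_rpow_div (inv_nonneg.2 hu.le) hδ
      _ = u ^ (c - δ) / δ := by rw [sub_eq_neg_add, Real.rpow_add hu]; ring
      _ ≤ (u ^ A + u ^ B) / δ := by
          gcongr
          linarith [Real.rpow_le_rpow_of_exponent_ge hu h1 (by linarith : A ≤ c - δ)]

lemma abs_plusPow_sub_plusPow_le {u δ A B p q : ℝ} (hδ : 0 < δ)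
    (hpA : A + δ ≤ p) (hpB : p + δ ≤ B) (hqA : A + δ ≤ q) (hqB : q + δ ≤ B) :
    |plusPow u p - plusPow u q| ≤ |p - q| / δ * (plusPow u A + plusPow u B) := by
  unfold plusPow
  split_ifs with hu
  · calc |u ^ p - u ^ q| ≤ |p - q| * (|Real.log u| * max (u ^ p) (u ^ q)) :=
          Real.abs_rpow_sub_rpow_le hu p q
      _ ≤ |p - q| * ((u ^ A + u ^ B) / δ) := by
          rw [mul_max_of_nonneg _ _ (abs_nonneg _)]
          gcongr
          exact max_le (Real.abs_log_mul_rpow_le hu hδ hpA hpB)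
            (Real.abs_log_mul_rpow_le hu hδ hqA hqB)
      _ = |p - q| / δ * (u ^ A + u ^ B) := by ring
  · simp

lemma abs_plusPow_half_sub_le {u δ a b H H' : ℝ} (hδ : 0 < δ)
    (hHa : a + δ ≤ H) (hHb : H + δ ≤ b) (hH'a : a + δ ≤ H') (hH'b : H' + δ ≤ b) :
    |plusPow u (H / 2 - 1) - plusPow u (H' / 2 - 1)| ≤
      δ⁻¹ * |H - H'| * (plusPow u (a / 2 - 1) + plusPow u (b / 2 - 1)) := by
  have hδ2 : (0 : ℝ) < δ / 2 := half_pos hδ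
  convert abs_plusPow_sub_plusPow_le (u := u) (A := a / 2 - 1) (B := b / 2 - 1)
    (p := H / 2 - 1) (q := H' / 2 - 1) hδ2 (by linarith) (by linarith) (by linarith)
    (by linarith) using 2
  rw [show H / 2 - 1 - (H' / 2 - 1) = (H - H') / 2 by ring, abs_div, abs_two]
  field_simp

lemma abs_rosenblattK_sub_le {δ a b H H' : ℝ} (hδ : 0 < δ)
    (hHa : a + δ ≤ H) (hHb : H + δ ≤ b) (hH'a : a + δ ≤ H') (hH'b : H' + δ ≤ b)
    (H₂ s x y : ℝ) :
    |rosenblattK H H₂ s x y - rosenblattK H' H₂ s x y| ≤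
      δ⁻¹ * |H - H'| * (rosenblattK a H₂ s x y + rosenblattK b H₂ s x y) := by
  set f := fun (u c : ℝ) => plusPow u (c / 2 - 1)
  have hf : ∀ u, |f u H - f u H'| ≤ δ⁻¹ * |H - H'| * (f u a + f u b) := fun u =>
    abs_plusPow_half_sub_le hδ hHa hHb hH'a hH'b
  have hgx : 0 ≤ f (s - x) H₂ := plusPow_nonneg _ _
  have hgy : 0 ≤ f (s - y) H₂ := plusPow_nonneg _ _
  change |f (s - x) H * f (s - y) H₂ + f (s - x) H₂ * f (s - y) H
      - (f (s - x) H' * f (s - y) H₂ + f (s - x) H₂ * f (s - y) H')| ≤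
    δ⁻¹ * |H - H'| * (f (s - x) a * f (s - y) H₂ + f (s - x) H₂ * f (s - y) a
      + (f (s - x) b * f (s - y) H₂ + f (s - x) H₂ * f (s - y) b))
  calc _ = |(f (s - x) H - f (s - x) H') * f (s - y) H₂
          + f (s - x) H₂ * (f (s - y) H - f (s - y) H')| := by ring_nf
    _ ≤ |f (s - x) H - f (s - x) H'| * f (s - y) H₂
          + f (s - x) H₂ * |f (s - y) H - f (s - y) H'| := by
        grw [abs_add_le, abs_mul, abs_mul, abs_of_nonneg hgx, abs_of_nonneg hgy]
    _ ≤ δ⁻¹ * |H - H'| * (f (s - x) a + f (s - x) b) * f (s - y) H₂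
          + f (s - x) H₂ * (δ⁻¹ * |H - H'| * (f (s - y) a + f (s - y) b)) := by
        gcongr <;> exact hf _
    _ = _ := by ring

theorem kernel_difference_domination_general (m₁ M₁ : ℝ) (ε : ℝ)
    (hε : ε ∈ Set.Ioo 0 (min (1 - M₁) (m₁ - 1/2))) :
    ∃ C > 0, ∀ H₁ ∈ Set.Icc m₁ M₁, ∀ H₁' ∈ Set.Icc m₁ M₁,
      ∀ H₂ ∈ Set.Ioo (1/2 : ℝ) 1, ∀ s x y : ℝ,
      |rosenblattK H₁ H₂ s x y - rosenblattK H₁' H₂ s x y| ≤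
        C * |H₁ - H₁'| *
          (rosenblattK (m₁ - ε) H₂ s x y + rosenblattK (M₁ + ε) H₂ s x y) :=
  ⟨ε⁻¹, inv_pos.2 hε.1, fun _ hH₁ _ hH₁' H₂ _ s x y =>
    abs_rosenblattK_sub_le hε.1 (by linarith [hH₁.1]) (by linarith [hH₁.2])
      (by linarith [hH₁'.1]) (by linarith [hH₁'.2]) H₂ s x y⟩

/-- Pointwise domination of the kernel difference in the first Hurst parameter. -/
theorem kernel_difference_domination (m₁ M₁ : ℝ) (hm₁ : 1/2 < m₁) (hle : m₁ ≤ M₁)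
    (hM₁ : M₁ < 1) (ε : ℝ) (hε : ε ∈ Set.Ioo 0 (min (1 - M₁) (m₁ - 1/2))) :
    ∃ C > 0, ∀ H₁ ∈ Set.Icc m₁ M₁, ∀ H₁' ∈ Set.Icc m₁ M₁,
      ∀ H₂ ∈ Set.Ioo (1/2 : ℝ) 1, ∀ s x y : ℝ,
      |rosenblattK H₁ H₂ s x y - rosenblattK H₁' H₂ s x y| ≤
        C * |H₁ - H₁'| *
          (rosenblattK (m₁ - ε) H₂ s x y + rosenblattK (M₁ + ε) H₂ s x y) :=
  kernel_difference_domination_general m₁ M₁ ε hε
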